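/- arXiv:1412.5889 — 5 statements merged into one kernel-verified Lean document; each statement's English description precedes it below -/
import Mathlib

section
/- Homogeneous version with the point at infinity: let q ≥ d(t-1) and let f be a homogeneous polynomial of degree d over F_q in n variables. Define, for polynomials z ∈ F_q[X]_{t-1}, l_β(z) = z(β) for β ∈ F_q and l_∞(z) = the coefficient of X^{t-1} in z. If z₁,...,zₙ ∈ F_q[X]_{t-1} satisfy f(z₁,...,zₙ) ≠ 0, then f(l(z₁),...,l(zₙ)) = 0 for at most d(t-1) of the q+1 maps l ∈ {l_β : β ∈ F_q} ∪ {l_∞}. (Key fact: the coefficient of X^{d(t-1)} in f(z₁,...,zₙ) equals f(l_∞(z₁),...,l_∞(zₙ)).) -/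
/-!
Substituting the `zᵢ` into a monomial of degree `d` gives a polynomial of degree at most
`d(t-1)` whose coefficient of `X^{d(t-1)}` is the same monomial evaluated at the coefficients of
`X^{t-1}` of the `zᵢ`. Hence `P = f(z)` has degree at most `d(t-1)` and top coefficient
`f(l_∞(z))`, while `f(l_β(z)) = P(β)`. The nonzero `P` has at most `natDegree P` roots, and
`natDegree P < d(t-1)` as soon as `f(l_∞(z)) = 0`.
-/

open Polynomial Finset

namespace Polynomial

theorem coeff_prod_sum_of_natDegree_le {R ι : Type*} [CommSemiring R] (s : Finset ι)
    (p : ι → R[X]) (b : ι → ℕ) (h : ∀ i ∈ s, (p i).natDegree ≤ b i) :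
    (∏ i ∈ s, p i).coeff (∑ i ∈ s, b i) = ∏ i ∈ s, (p i).coeff (b i) := by
  induction s using Finset.cons_induction with
  | empty => simp
  | cons a s has ih =>
    rw [prod_cons, sum_cons, prod_cons,
      coeff_mul_add_eq_of_natDegree_le (h a (mem_cons_self a s))
        ((natDegree_prod_le s p).trans (sum_le_sum fun i hi => h i (mem_cons_of_mem hi))),
      ih fun i hi => h i (mem_cons_of_mem hi)]

theorem card_filter_eval_eq_zero_add_ite_le {R : Type*} [CommRing R] [IsDomain R] [Fintype R]
    [DecidableEq R] {p : R[X]} (hp : p ≠ 0) {N : ℕ} (hN : p.natDegree ≤ N) :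
    #{x | p.eval x = 0} + (if p.coeff N = 0 then 1 else 0) ≤ N := by
  have hroots : #{x | p.eval x = 0} ≤ p.natDegree :=
    card_le_degree_of_subset_roots fun x hx => by simpa [mem_roots hp] using hx
  split_ifs with hN0
  · have : p.natDegree ≠ N := fun h => hp (leadingCoeff_eq_zero.mp (by rwa [leadingCoeff, h]))
    omega
  · omega

end Polynomial

namespace MvPolynomial

variable {σ R : Type*} [CommSemiring R] {φ : MvPolynomial σ R} {d k : ℕ} {z : σ → R[X]}

theorem IsHomogeneous.natDegree_aeval_le (hφ : φ.IsHomogeneous d)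
    (hz : ∀ i, (z i).natDegree ≤ k) :
    (MvPolynomial.aeval z φ).natDegree ≤ d * k := by
  rw [aeval_def, eval₂_eq]
  refine natDegree_sum_le_of_forall_le _ _ fun m hm => ?_
  calc (algebraMap R R[X] (φ.coeff m) * ∏ i ∈ m.support, z i ^ m i).natDegree
      ≤ ∑ i ∈ m.support, (z i ^ m i).natDegree :=
        (natDegree_C_mul_le _ _).trans (natDegree_prod_le _ _)
    _ ≤ ∑ i ∈ m.support, m i * k :=
        sum_le_sum fun i _ => natDegree_pow_le.trans (Nat.mul_le_mul_left _ (hz i))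
    _ = d * k := by rw [← sum_mul, ← hφ.degree_eq_sum_deg_support hm]

theorem IsHomogeneous.coeff_aeval_mul (hφ : φ.IsHomogeneous d)
    (hz : ∀ i, (z i).natDegree ≤ k) :
    (MvPolynomial.aeval z φ).coeff (d * k) = eval (fun i => (z i).coeff k) φ := by
  rw [aeval_def, eval₂_eq, eval_eq, finsetSum_coeff]
  refine sum_congr rfl fun m hm => ?_
  rw [Polynomial.algebraMap_eq, Polynomial.coeff_C_mul, hφ.degree_eq_sum_deg_support hm, sum_mul,
    coeff_prod_sum_of_natDegree_le _ _ _ fun i _ =>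
      natDegree_pow_le.trans (Nat.mul_le_mul_left _ (hz i))]
  simp only [coeff_pow_of_natDegree_le (hz _)]

theorem eval_polynomial_aeval (x : R) :
    (MvPolynomial.aeval z φ).eval x = eval (fun i => (z i).eval x) φ := by
  simpa using comp_aeval_apply (Polynomial.aeval x) φ (f := z)

end MvPolynomial

open Classical in
theorem eval_tester_homogeneous_infty_general {F : Type*} [Field F] [Fintype F] (n d t : ℕ)
    (f : MvPolynomial (Fin n) F) (hhom : f.IsHomogeneous d)
    (z : Fin n → Polynomial F) (hz : ∀ i, (z i).natDegree ≤ t - 1)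
    (hfz : MvPolynomial.aeval z f ≠ 0) :
    ((MvPolynomial.aeval z f).coeff (d * (t - 1)) =
        MvPolynomial.eval (fun i => (z i).coeff (t - 1)) f) ∧
    (Finset.univ.filter fun β : F =>
        MvPolynomial.eval (fun i => (z i).eval β) f = 0).card +
      (if MvPolynomial.eval (fun i => (z i).coeff (t - 1)) f = 0 then 1 else 0)
      ≤ d * (t - 1) := by
  have hcoeff := hhom.coeff_aeval_mul hz
  refine ⟨hcoeff, ?_⟩
  simp_rw [← MvPolynomial.eval_polynomial_aeval, ← hcoeff]
  exact card_filter_eval_eq_zero_add_ite_le hfz (hhom.natDegree_aeval_le hz)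

open Classical in
/-- Homogeneous version with the point at infinity: let `q ≥ d(t-1)` and let `f` be a
homogeneous polynomial of degree `d` over `F_q` in `n` variables.  For polynomials
`z ∈ F_q[X]_{t-1}` put `l_β(z) = z(β)` for `β ∈ F_q` and `l_∞(z) =` the coefficient of
`X^{t-1}` in `z`.  If `z₁,…,zₙ ∈ F_q[X]_{t-1}` satisfy `f(z₁,…,zₙ) ≠ 0`, then
`f(l(z₁),…,l(zₙ)) = 0` for at most `d(t-1)` of the `q+1` maps `l ∈ {l_β} ∪ {l_∞}`.
(Key fact: the coefficient of `X^{d(t-1)}` in `f(z₁,…,zₙ)` equals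
`f(l_∞(z₁),…,l_∞(zₙ))`.) -/
theorem eval_tester_homogeneous_infty {F : Type*} [Field F] [Fintype F] (n d t : ℕ)
    (ht : 1 ≤ t) (hq : d * (t - 1) ≤ Fintype.card F)
    (f : MvPolynomial (Fin n) F) (hhom : f.IsHomogeneous d)
    (z : Fin n → Polynomial F) (hz : ∀ i, (z i).natDegree ≤ t - 1)
    (hfz : MvPolynomial.aeval z f ≠ 0) :
    ((MvPolynomial.aeval z f).coeff (d * (t - 1)) =
        MvPolynomial.eval (fun i => (z i).coeff (t - 1)) f) ∧
    (Finset.univ.filter fun β : F =>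
        MvPolynomial.eval (fun i => (z i).eval β) f = 0).card +
      (if MvPolynomial.eval (fun i => (z i).coeff (t - 1)) f = 0 then 1 else 0)
      ≤ d * (t - 1) :=
  eval_tester_homogeneous_infty_general n d t f hhom z hz hfz
end

section
/- Density upper bound for multilinear forms: for any assignment z assigning nonzero evaluation to every product of d linear forms from P^t(F_q), and any finite multiset S of points in (F_q^n)^d obtained from z by maps, there exist d linear forms f₁,...,f_d (each in t variables over F_q, one per block) such that the product f₁···f_d is nonzero on at most ((1 − 1/q + (q−1)/(q(q^t−1)))^d)·|S| points of S. Consequently, any finite (1-ε)-tester for HLF(F_q,n,d) from F_{q^t} to F_q must have ε ≥ 1 − (1 − 1/q + (q−1)/(q(q^t−1)))^d. -/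
/-!
A nonzero vector of `F_q^t` is annihilated by exactly `q^(t-1)` of the `q^t` linear forms, so
at a fixed point `a` of `(F_q^t)^d` a `d`-tuple of nonzero forms has nonvanishing product for
at most a `ρ^d` fraction of all such tuples, where `ρ = (q^t - q^(t-1)) / (q^t - 1)`. Averaging
over the tuples, some tuple has nonvanishing product on at most `ρ^d |S|` points of `S`.

For a tester `L`, take the point `z` whose `d` blocks each list an `F_q`-basis of `F_{q^t}`, and
choose the tuple for the multiset of images `l z`, `l ∈ L`. The product of its forms, in the
coordinates of `z`, is a multilinear polynomial that does not vanish at `z` by linear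
independence, so the tester keeps it nonzero on at least `(1 - ε)|L|` of these images, whereas
the choice of the tuple allows at most `ρ^d |L|`.
-/

open Finset

/-- The fraction `(q^t - q^(t-1)) / (q^t - 1)` of the nonzero linear forms on `F_q^t` that do not
vanish at a given nonzero vector. -/
noncomputable def densityBound (q t : ℕ) : ℝ :=
  1 - 1 / (q : ℝ) + ((q : ℝ) - 1) / ((q : ℝ) * ((q : ℝ) ^ t - 1))

lemma densityBound_mul {q t : ℕ} (hq : 1 < q) (ht : 0 < t) :
    densityBound q t * ((q : ℝ) ^ t - 1) = (q : ℝ) ^ t - (q : ℝ) ^ t / q := by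
  have hq' : (1 : ℝ) < q := by exact_mod_cast hq
  have hqt : (q : ℝ) ^ t - 1 ≠ 0 := (sub_pos.2 (one_lt_pow₀ hq' ht.ne')).ne'
  unfold densityBound
  field_simp
  ring

lemma Module.Dual.natCard_ker_mul_natCard {K V : Type*} [Field K] [AddCommGroup V]
    [Module K V] [FiniteDimensional K V] {f : Module.Dual K V} (hf : f ≠ 0) :
    Nat.card (LinearMap.ker f) * Nat.card K = Nat.card V := by
  rw [Module.natCard_eq_pow_finrank (K := K) (V := V), Module.natCard_eq_pow_finrank (K := K),
    ← f.finrank_ker_add_one_of_ne_zero hf, pow_succ]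

lemma Multiset.sum_card_filter_eq_sum_map_card_filter {α β : Type*} (S : Multiset α)
    (s : Finset β) (p : β → α → Prop) [∀ b a, Decidable (p b a)] :
    ∑ b ∈ s, Multiset.card (S.filter (p b)) = (S.map fun a => #{b ∈ s | p b a}).sum := by
  induction S using Multiset.induction_on with
  | empty => simp
  | cons a S ih =>
    simp only [Multiset.filter_cons, Multiset.card_add, Multiset.map_cons, Multiset.sum_cons,
      sum_add_distrib, ih, card_filter]
    congr 1
    exact sum_congr rfl fun b _ => by split <;> simp

lemma Multiset.exists_card_filter_le_of_forall_card_filter_le {α β : Type*} (S : Multiset α)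
    {s : Finset β} (hs : s.Nonempty) (p : β → α → Prop) [∀ b a, Decidable (p b a)]
    {c : ℝ}
    (h : ∀ a ∈ S, (#{b ∈ s | p b a} : ℝ) ≤ c * #s) :
    ∃ b ∈ s, (Multiset.card (S.filter (p b)) : ℝ) ≤ c * Multiset.card S := by
  refine exists_le_of_sum_le hs ?_
  calc ∑ b ∈ s, (Multiset.card (S.filter (p b)) : ℝ)
      = (S.map fun a => (#{b ∈ s | p b a} : ℝ)).sum := by
        rw [← Nat.cast_sum, S.sum_card_filter_eq_sum_map_card_filter s p,
          Nat.cast_multiset_sum, Multiset.map_map]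
        rfl
    _ ≤ (S.map fun _ => c * #s).sum := Multiset.sum_map_le_sum_map _ _ h
    _ = ∑ _b ∈ s, c * Multiset.card S := by
      simp only [Multiset.map_const', Multiset.sum_replicate, nsmul_eq_mul, sum_const]
      ring

section FiniteField

variable {F : Type*} [Field F] [Fintype F] [DecidableEq F] {t : ℕ}

lemma card_filter_dotProduct_ne_zero (v : Fin t → F) (hv : v ≠ 0) :
    (#{l : Fin t → F | l ⬝ᵥ v ≠ 0} : ℝ) =
      (Fintype.card F : ℝ) ^ t - (Fintype.card F : ℝ) ^ t / Fintype.card F := by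
  set φ : Module.Dual F (Fin t → F) := LinearMap.flip (dotProductBilin F F) v
  have hφ : φ ≠ 0 := by
    obtain ⟨i, hi⟩ := Function.ne_iff.1 hv
    refine fun h => hi ?_
    simpa [φ] using LinearMap.congr_fun h (Pi.single i 1)
  have hzero :
      (#{l : Fin t → F | l ⬝ᵥ v = 0} : ℝ) * Fintype.card F = Fintype.card F ^ t := by
    have hker := φ.natCard_ker_mul_natCard hφ
    rw [Nat.card_congr (Equiv.subtypeEquivRight fun l => by simp [φ] :
      LinearMap.ker φ ≃ {l : Fin t → F // l ⬝ᵥ v = 0})] at hker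
    simp only [Nat.card_eq_fintype_card, Fintype.card_subtype, Fintype.card_fun,
      Fintype.card_fin] at hker
    exact_mod_cast hker
  have hsplit := card_filter_add_card_filter_not (s := univ) fun l : Fin t → F => l ⬝ᵥ v = 0
  rw [card_univ, Fintype.card_fun, Fintype.card_fin] at hsplit
  have hq : (Fintype.card F : ℝ) ≠ 0 := by exact_mod_cast Fintype.card_ne_zero
  rw [← eq_div_iff hq] at hzero
  rw [← hzero, eq_sub_iff_add_eq, add_comm]
  exact_mod_cast hsplit

lemma card_filter_dotProduct_ne_zero_le (ht : 0 < t) (v : Fin t → F) :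
    (#{l : Fin t → F | l ≠ 0 ∧ l ⬝ᵥ v ≠ 0} : ℝ) ≤
      densityBound (Fintype.card F) t * #{l : Fin t → F | l ≠ 0} := by
  have hnonzero : (#{l : Fin t → F | l ≠ 0} : ℝ) = (Fintype.card F : ℝ) ^ t - 1 := by
    have : 1 ≤ Fintype.card F ^ t := Nat.one_le_pow _ _ Fintype.card_pos
    simp [filter_ne', Nat.cast_sub this]
  rw [hnonzero, densityBound_mul Fintype.one_lt_card ht]
  by_cases hv : v = 0
  · have hq : (1 : ℝ) ≤ Fintype.card F := by exact_mod_cast Fintype.card_pos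
    simpa [hv] using div_le_self (by positivity : (0 : ℝ) ≤ Fintype.card F ^ t) hq
  · rw [← card_filter_dotProduct_ne_zero v hv]
    exact_mod_cast card_le_card fun l => by simp +contextual

lemma card_filter_prod_dotProduct_ne_zero_le {ι : Type*} [Fintype ι] [DecidableEq ι]
    (ht : 0 < t) (a : ι → Fin t → F) :
    (#{lam ∈ Fintype.piFinset fun _ : ι => {l : Fin t → F | l ≠ 0} |
        ∏ i, lam i ⬝ᵥ a i ≠ 0} : ℝ)
      ≤ densityBound (Fintype.card F) t ^ Fintype.card ι *
        #(Fintype.piFinset fun _ : ι => {l : Fin t → F | l ≠ 0}) := by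
  have hfilter :
      {lam ∈ Fintype.piFinset fun _ : ι => {l : Fin t → F | l ≠ 0} |
          ∏ i, lam i ⬝ᵥ a i ≠ 0}
        = Fintype.piFinset fun i => {l : Fin t → F | l ≠ 0 ∧ l ⬝ᵥ a i ≠ 0} := by
    ext lam
    simp only [mem_filter, Fintype.mem_piFinset, mem_univ, true_and, prod_ne_zero_iff,
      forall_const]
    exact ⟨fun h i => ⟨h.1 i, h.2 i⟩, fun h => ⟨fun i => (h i).1, fun i => (h i).2⟩⟩
  rw [hfilter, Fintype.card_piFinset, Fintype.card_piFinset, Nat.cast_prod, Nat.cast_prod,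
    ← card_univ (α := ι), pow_card_mul_prod]
  exact prod_le_prod (fun _ _ => by positivity) fun i _ =>
    card_filter_dotProduct_ne_zero_le ht (a i)

lemma exists_forall_ne_zero_card_filter_prod_dotProduct_ne_zero_le {ι : Type*} [Fintype ι]
    (ht : 0 < t) (S : Multiset (ι → Fin t → F)) :
    ∃ lam : ι → Fin t → F, (∀ i, lam i ≠ 0) ∧
      (Multiset.card (S.filter fun a => ∏ i, lam i ⬝ᵥ a i ≠ 0) : ℝ)
        ≤ densityBound (Fintype.card F) t ^ Fintype.card ι * Multiset.card S := by
  classical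
  have hne : (fun _ => 1 : Fin t → F) ≠ 0 := fun h => one_ne_zero (congr_fun h ⟨0, ht⟩)
  have hnon : (Fintype.piFinset fun _ : ι => ({l | l ≠ 0} : Finset (Fin t → F))).Nonempty :=
    Fintype.piFinset_nonempty.2 fun _ => ⟨_, mem_filter.2 ⟨mem_univ _, hne⟩⟩
  obtain ⟨lam, hlam, hcount⟩ := S.exists_card_filter_le_of_forall_card_filter_le hnon
    (fun lam a => ∏ i, lam i ⬝ᵥ a i ≠ 0)
    (c := densityBound (Fintype.card F) t ^ Fintype.card ι)
    fun a _ => card_filter_prod_dotProduct_ne_zero_le ht a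
  exact ⟨lam, fun i => (mem_filter.1 (Fintype.mem_piFinset.1 hlam i)).2, hcount⟩

end FiniteField

namespace MvPolynomial

variable {R σ ι κ : Type*} [CommSemiring R] [Fintype ι] [Fintype κ]

/-- The multilinear forms `HLF` of the paper: every monomial is `y_{1,τ 1} ⋯ y_{d,τ d}`. -/
def IsBlockMultilinear (f : MvPolynomial (ι × σ) R) : Prop :=
  ∀ mo ∈ f.support, ∃ τ : ι → σ, mo = ∑ i, Finsupp.single (i, τ i) 1

noncomputable def prodLinearForms (c : ι → κ → R) (e : κ → σ) :
    MvPolynomial (ι × σ) R :=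
  ∏ i, ∑ j, C (c i j) * X (i, e j)

lemma isBlockMultilinear_prodLinearForms (c : ι → κ → R) (e : κ → σ) :
    IsBlockMultilinear (prodLinearForms c e) := by
  classical
  intro mo hmo
  have hexpand : prodLinearForms c e = ∑ τ ∈ Fintype.piFinset fun _ => univ,
      monomial (∑ i, Finsupp.single (i, e (τ i)) 1) (∏ i, c i (τ i)) := by
    simp only [prodLinearForms, prod_univ_sum, monomial_sum_prod, C_mul_X_eq_monomial]
  rw [hexpand] at hmo
  obtain ⟨τ, -, hτ⟩ := mem_biUnion.1 (support_sum hmo)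
  exact ⟨fun i => e (τ i), mem_singleton.1 (support_monomial_subset hτ)⟩

lemma aeval_prodLinearForms {A : Type*} [CommSemiring A] [Algebra R A] (c : ι → κ → R)
    (e : κ → σ) (x : ι × σ → A) :
    aeval x (prodLinearForms c e) = ∏ i, ∑ j, c i j • x (i, e j) := by
  simp [prodLinearForms, Algebra.smul_def]

lemma eval_prodLinearForms (c : ι → κ → R) (e : κ → σ) (x : ι × σ → R) :
    eval x (prodLinearForms c e) = ∏ i, ∑ j, c i j * x (i, e j) := by
  simp [prodLinearForms]

lemma aeval_prodLinearForms_extend_basis_ne_zero {R A : Type*} [CommRing R] [CommRing A]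
    [IsDomain A] [Algebra R A] {c : ι → κ → R} (hc : ∀ i, c i ≠ 0)
    (b : Module.Basis κ R A)
    {e : κ → σ} (he : e.Injective) :
    aeval (fun p : ι × σ => Function.extend e b 0 p.2) (prodLinearForms c e) ≠ 0 := by
  simp only [aeval_prodLinearForms, he.extend_apply]
  exact prod_ne_zero_iff.2 fun i _ h =>
    hc i (_root_.funext (Fintype.linearIndependent_iff.1 b.linearIndependent _ h))

end MvPolynomial

lemma exists_forall_ne_zero_card_filter_prod_ne_zero_le {F : Type*} [Field F] [Fintype F]
    [DecidableEq F] {n t d : ℕ} (ht : 0 < t) (htn : t ≤ n)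
    (S : Multiset (Fin d × Fin n → F)) :
    ∃ lam : Fin d → Fin t → F, (∀ i, lam i ≠ 0) ∧
      ((S.filter fun a =>
          (∏ i : Fin d, ∑ mm : Fin t, lam i mm * a (i, Fin.castLE htn mm)) ≠ 0).card : ℝ)
        ≤ densityBound (Fintype.card F) t ^ d * (S.card : ℝ) := by
  obtain ⟨lam, hlam, hcount⟩ := exists_forall_ne_zero_card_filter_prod_dotProduct_ne_zero_le ht
    (S.map fun a i mm => a (i, Fin.castLE htn mm))
  rw [Multiset.filter_map, Multiset.card_map, Multiset.card_map, Fintype.card_fin] at hcount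
  exact ⟨lam, hlam, hcount⟩

open Classical in
/-- Density upper bound for multilinear forms.  First: for any finite multiset `S` of
points in `(F_q^n)^d` there are `d` nonzero linear forms `λ₁,…,λ_d` (each in `t`
variables over `F_q`, one per block) such that the product `λ₁⋯λ_d` is nonzero on at
most `(1 − 1/q + (q−1)/(q(q^t−1)))^d · |S|` points of `S`.  Consequently, any finite
(nonempty) `(1-ε)`-tester for the class `HLF(F_q,n,d)` of degree-`d` multilinear forms
from `F_{q^t}` to `F_q` must have `ε ≥ 1 − (1 − 1/q + (q−1)/(q(q^t−1)))^d`. -/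
theorem hlf_density_upper_bound {F K : Type*} [Field F] [Fintype F]
    [Field K] [Fintype K] [Algebra F K]
    (n t d : ℕ) (ht : 0 < t) (htn : t ≤ n)
    (hK : Fintype.card K = Fintype.card F ^ t)
    (ε : ℝ) (L : Finset ((Fin d × Fin n → K) → (Fin d × Fin n → F))) (hL : L.Nonempty)
    (htester : ∀ f : MvPolynomial (Fin d × Fin n) F,
      (∀ mo ∈ f.support, ∃ σ : Fin d → Fin n,
        mo = ∑ i : Fin d, Finsupp.single (i, σ i) 1) →
      ∀ a : Fin d × Fin n → K, MvPolynomial.aeval a f ≠ 0 →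
        (1 - ε) * (L.card : ℝ) ≤
          ((L.filter fun l => MvPolynomial.eval (l a) f ≠ 0).card : ℝ)) :
    (∀ S : Multiset (Fin d × Fin n → F), ∃ lam : Fin d → Fin t → F,
      (∀ i, lam i ≠ 0) ∧
      ((S.filter fun a =>
          (∏ i : Fin d, ∑ mm : Fin t, lam i mm * a (i, Fin.castLE htn mm)) ≠ 0).card : ℝ)
        ≤ (1 - 1 / (Fintype.card F : ℝ) +
            ((Fintype.card F : ℝ) - 1) /
              ((Fintype.card F : ℝ) * ((Fintype.card F : ℝ) ^ t - 1))) ^ d * (S.card : ℝ)) ∧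
    1 - (1 - 1 / (Fintype.card F : ℝ) +
          ((Fintype.card F : ℝ) - 1) /
            ((Fintype.card F : ℝ) * ((Fintype.card F : ℝ) ^ t - 1))) ^ d ≤ ε := by
  refine ⟨exists_forall_ne_zero_card_filter_prod_ne_zero_le ht htn, ?_⟩
  have hrank : Module.finrank F K = t := by
    rw [Module.card_eq_pow_finrank (K := F)] at hK
    exact Nat.pow_right_injective Fintype.one_lt_card hK
  let b := Module.finBasisOfFinrankEq F K hrank
  let z : Fin d × Fin n → K := fun p => Function.extend (Fin.castLE htn) b 0 p.2
  obtain ⟨lam, hlam, hcount⟩ :=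
    exists_forall_ne_zero_card_filter_prod_ne_zero_le ht htn (L.val.map (· z))
  rw [Multiset.filter_map, Multiset.card_map, Multiset.card_map] at hcount
  have hz := MvPolynomial.aeval_prodLinearForms_extend_basis_ne_zero (ι := Fin d) hlam b
    (Fin.castLE_injective htn)
  have htest := htester _ (MvPolynomial.isBlockMultilinear_prodLinearForms _ _) z hz
  simp only [MvPolynomial.eval_prodLinearForms] at htest
  have hdensity : 1 - ε ≤ densityBound (Fintype.card F) t ^ d :=
    le_of_mul_le_mul_right (htest.trans hcount) (by exact_mod_cast hL.card_pos)
  unfold densityBound at hdensity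
  linarith
end

section
/- Density lower bound forcing ε ≥ d/q for total-degree-d polynomials: if there exists a finite (1-ε)-tester for the class P(F_q,n,d) of polynomials of total degree ≤ d from F_{q^t} (t ≥ 2) to F_q, then ε ≥ d/q. Proof idea: for α ∈ F_{q^t}\F_q and any finite multiset S ⊆ F_q, there exist β₁,...,β_d ∈ F_q such that the product (x−β₁)···(x−β_d), which is nonzero at α, vanishes on at least a d/q fraction of S. -/
/-!
Pick `α ∈ F_{q^t} \ F_q` and evaluate at the constant point `a = (α, …, α)`. For a translate
`γ + T` of a set `T ⊆ F_q` of size `e = min d q`, the polynomial `∏_{β ∈ γ + T} (X₀ - β)` has total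
degree `e ≤ d` and does not vanish at `a`, but vanishes at every `l a` whose first coordinate lies
in `γ + T`. Each element of `F_q` lies in exactly `e` of the `q` translates, so some translate
catches at least an `e/q` fraction of the tester's values `(l a)₀`. The tester property then forces
`e/q ≤ ε`, which is `d/q ≤ ε` when `d ≤ q` and contradicts `ε < 1` otherwise.
-/

open Finset MvPolynomial Pointwise

section Translates

variable {G ι : Type*} [AddCommGroup G] [Fintype G] [DecidableEq G]

theorem card_filter_mem_vadd_finset (T : Finset G) (x : G) :
    #{γ : G | x ∈ γ +ᵥ T} = #T := by
  have : ({γ | x ∈ γ +ᵥ T} : Finset G) = T.image (x - ·) := by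
    ext γ
    simp only [mem_filter, mem_univ, true_and, mem_image, ← neg_vadd_mem_iff, vadd_eq_add]
    exact ⟨fun h => ⟨-γ + x, h, by abel⟩, fun ⟨t, ht, hγ⟩ => by rw [← hγ]; simpa using ht⟩
  rw [this, card_image_of_injective _ sub_right_injective]

theorem exists_card_mul_card_le_card_mul_card_filter_mem_vadd_finset
    (T : Finset G) (s : Finset ι) (g : ι → G) :
    ∃ γ : G, #T * #s ≤ Fintype.card G * #{i ∈ s | g i ∈ γ +ᵥ T} := by
  have double_count : ∑ γ : G, #{i ∈ s | g i ∈ γ +ᵥ T} = #s * #T := by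
    have := sum_card_bipartiteAbove_eq_sum_card_bipartiteBelow (s := (univ : Finset G)) (t := s)
      (fun γ i => g i ∈ γ +ᵥ T)
    simp only [bipartiteAbove, bipartiteBelow, card_filter_mem_vadd_finset] at this
    rw [this, sum_const, smul_eq_mul]
  obtain ⟨γ, -, hγ⟩ := exists_le_of_sum_le (s := (univ : Finset G)) (f := fun _ => #T * #s)
    (g := fun γ => Fintype.card G * #{i ∈ s | g i ∈ γ +ᵥ T}) univ_nonempty
    (le_of_eq (by rw [sum_const, card_univ, smul_eq_mul, ← mul_sum, double_count]; ring))
  exact ⟨γ, hγ⟩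

end Translates

section ProdXSubC

variable {σ R A : Type*} [CommRing R] [CommRing A] [IsDomain A] [Algebra R A]

noncomputable def prodXSubC (i : σ) (S : Finset R) : MvPolynomial σ R :=
  ∏ β ∈ S, (X i - C β)

theorem totalDegree_prodXSubC_le [Nontrivial R] (i : σ) (S : Finset R) :
    (prodXSubC i S).totalDegree ≤ #S := by
  refine (totalDegree_finsetProd _ _).trans ?_
  refine (sum_le_sum fun β _ => (totalDegree_sub _ _).trans ?_).trans_eq (card_eq_sum_ones S).symm
  simp [totalDegree_X, totalDegree_C]

theorem eval_prodXSubC_eq_zero {i : σ} {S : Finset R} {x : σ → R} (hx : x i ∈ S) :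
    eval x (prodXSubC i S) = 0 := by
  rw [prodXSubC, map_prod]
  exact prod_eq_zero hx (by simp)

theorem aeval_prodXSubC_ne_zero {i : σ} (S : Finset R) {a : σ → A}
    (ha : a i ∉ Set.range (algebraMap R A)) :
    aeval a (prodXSubC i S) ≠ 0 := by
  rw [prodXSubC, map_prod, prod_ne_zero_iff]
  intro β _
  simpa [sub_eq_zero] using fun h => ha ⟨β, h.symm⟩

end ProdXSubC

theorem exists_notMem_range_algebraMap_of_card_lt {R A : Type*} [CommSemiring R] [Fintype R]
    [Semiring A] [Fintype A] [Algebra R A] (h : Fintype.card R < Fintype.card A) :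
    ∃ α : A, α ∉ Set.range (algebraMap R A) := by
  by_contra! hsurj
  exact h.not_ge (Fintype.card_le_of_surjective _ fun α => hsurj α)

theorem card_filter_add_card_filter_le_card {α : Type*} (s : Finset α) (p q : α → Prop)
    [DecidablePred p] [DecidablePred q] (hpq : ∀ x ∈ s, p x → ¬q x) :
    #{x ∈ s | p x} + #{x ∈ s | q x} ≤ #s := by
  classical
  rw [← card_union_of_disjoint (disjoint_filter.mpr hpq)]
  exact card_le_card (union_subset (filter_subset _ _) (filter_subset _ _))

open Classical in
theorem density_lower_bound_total_degree_general {F K : Type*} [Field F] [Fintype F]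
    [Field K] [Fintype K] [Algebra F K]
    (n t d : ℕ) (hn : 0 < n) (ht : 2 ≤ t)
    (hK : Fintype.card K = Fintype.card F ^ t)
    (ε : ℝ) (hε1 : ε < 1)
    (L : Finset ((Fin n → K) → (Fin n → F))) (hL : L.Nonempty)
    (htester : ∀ f : MvPolynomial (Fin n) F, f.totalDegree ≤ d →
      ∀ a : Fin n → K, MvPolynomial.aeval a f ≠ 0 →
        (1 - ε) * (L.card : ℝ) ≤
          ((L.filter fun l => MvPolynomial.eval (l a) f ≠ 0).card : ℝ)) :
    (d : ℝ) / (Fintype.card F : ℝ) ≤ ε := by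
  set q := Fintype.card F
  obtain ⟨α, hα⟩ := exists_notMem_range_algebraMap_of_card_lt (R := F) (A := K)
    (hK ▸ lt_self_pow₀ Fintype.one_lt_card ht)
  let i : Fin n := ⟨0, hn⟩
  let a : Fin n → K := fun _ => α
  obtain ⟨T, -, hT⟩ := exists_subset_card_eq (s := (univ : Finset F)) (n := min d q)
    (by rw [card_univ]; exact min_le_right _ _)
  obtain ⟨γ, hγ⟩ := exists_card_mul_card_le_card_mul_card_filter_mem_vadd_finset T L (· a i)
  set f := prodXSubC i (γ +ᵥ T)
  have hf : f.totalDegree ≤ d :=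
    (totalDegree_prodXSubC_le i _).trans (by rw [card_vadd_finset, hT]; exact min_le_left _ _)
  have htest := htester f hf a (aeval_prodXSubC_ne_zero _ hα)
  have hcount := card_filter_add_card_filter_le_card L (fun l => eval (l a) f ≠ 0)
    (· a i ∈ γ +ᵥ T) fun l _ hl hmem => hl (eval_prodXSubC_eq_zero hmem)
  set caught := #{l ∈ L | l a i ∈ γ +ᵥ T}
  have hcaught : (caught : ℝ) ≤ ε * #L := by
    have : ((#{l ∈ L | eval (l a) f ≠ 0} : ℕ) : ℝ) + caught ≤ #L := by exact_mod_cast hcount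
    linarith
  have hmin : (min d q : ℝ) ≤ q * ε := by
    refine le_of_mul_le_mul_right ?_ (by exact_mod_cast hL.card_pos : (0 : ℝ) < #L)
    calc (min d q : ℝ) * #L ≤ q * caught := by rw [hT] at hγ; exact_mod_cast hγ
      _ ≤ q * (ε * #L) := by gcongr
      _ = q * ε * #L := by ring
  have hq : (0 : ℝ) < q := by exact_mod_cast Fintype.card_pos
  rcases le_total d q with hdq | hqd
  · rw [div_le_iff₀ hq]
    simpa [hdq, mul_comm] using hmin
  · rw [min_eq_right (by exact_mod_cast hqd)] at hmin
    nlinarith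

open Classical in
/-- Density lower bound forcing `ε ≥ d/q` for total-degree-`d` polynomials: if there
exists a finite nonempty `(1-ε)`-tester (with `0 ≤ ε < 1`) for the class `P(F_q,n,d)`
of multivariate polynomials of total degree at most `d` from `F_{q^t}` (`t ≥ 2`) to
`F_q`, then `ε ≥ d/q`. -/
theorem density_lower_bound_total_degree {F K : Type*} [Field F] [Fintype F]
    [Field K] [Fintype K] [Algebra F K]
    (n t d : ℕ) (hn : 0 < n) (ht : 2 ≤ t)
    (hK : Fintype.card K = Fintype.card F ^ t)
    (ε : ℝ) (hε0 : 0 ≤ ε) (hε1 : ε < 1)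
    (L : Finset ((Fin n → K) → (Fin n → F))) (hL : L.Nonempty)
    (htester : ∀ f : MvPolynomial (Fin n) F, f.totalDegree ≤ d →
      ∀ a : Fin n → K, MvPolynomial.aeval a f ≠ 0 →
        (1 - ε) * (L.card : ℝ) ≤
          ((L.filter fun l => MvPolynomial.eval (l a) f ≠ 0).card : ℝ)) :
    (d : ℝ) / (Fintype.card F : ℝ) ≤ ε :=
  density_lower_bound_total_degree_general n t d hn ht hK ε hε1 L hL htester
end

section
/- For any two lexicographically consecutive vectors λ₁, λ₂ in F_q^t (with respect to any total order on F_q), at least one of λ₁, λ₂ has period t, i.e., its t cyclic shifts are pairwise distinct. -/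
/-!
Let `i` be the first position where `u < v` differ. Since `v` covers `u`, every entry of `u`
after `i` is maximal and every entry of `v` after `i` is minimal. If `u` has a proper cyclic
period `d`, which may be taken to divide `t`, then `i + d ≥ t`, for otherwise
`u (i + d) = u i < v i` would not be maximal; likewise `i + e ≥ t` for a proper period `e` of
`v`. As `d` and `e` are proper divisors of `t`, this gives `i ≥ d + e - gcd d e`, so the
Fine–Wilf theorem gives the common prefix of length `i` the period `gcd d e`. Hence
`u i = u (i - d) = v (i - e) = v i`, a contradiction.
-/

/-- A vector `x ∈ F^t` has (full) period `t` if its `t` cyclic shifts are pairwise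
distinct. -/
def HasFullPeriod {F : Type*} {t : ℕ} (x : Fin t → F) : Prop :=
  Function.Injective fun k : Fin t => fun i : Fin t => x (i - k)

open Function Fin.NatCast

theorem Nat.succ_mul_le_of_dvd_of_mul_lt {a b k : ℕ} (hab : a ∣ b) (hlt : k * a < b) :
    (k + 1) * a ≤ b := by
  obtain ⟨m, rfl⟩ := hab
  rw [mul_comm a m] at hlt ⊢
  exact Nat.mul_le_mul_right a (Nat.lt_of_mul_lt_mul_right hlt)

theorem Nat.two_mul_add_le_add_gcd {d e t : ℕ} (hd : d ∣ t) (he : e ∣ t) (het : e < t)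
    (hde : d ≤ e) : 2 * d + e ≤ t + d.gcd e := by
  have hd0 : 0 < d := Nat.pos_of_dvd_of_pos hd (by omega)
  have h2e : 2 * e ≤ t := Nat.succ_mul_le_of_dvd_of_mul_lt he (by omega)
  set g := d.gcd e
  have hg0 : 0 < g := Nat.gcd_pos_of_pos_left e hd0
  obtain hgd | hgd := (Nat.le_of_dvd hd0 (Nat.gcd_dvd_left d e)).lt_or_eq
  · have h2d : 2 * g ≤ d := Nat.succ_mul_le_of_dvd_of_mul_lt (Nat.gcd_dvd_left d e) (by omega)
    have hlt : d < e := hde.lt_of_ne fun h => by simp [h] at hgd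
    have h3e : 3 * g ≤ e := Nat.succ_mul_le_of_dvd_of_mul_lt (Nat.gcd_dvd_right d e) (by omega)
    have hlcm : d.lcm e ≤ t := Nat.le_of_dvd (by omega) (Nat.lcm_dvd hd he)
    have hmul : g * d.lcm e = d * e := Nat.gcd_mul_lcm d e
    -- `g * (lcm + g - 2d - e) = (d - g) * (e - 2g) - g² ≥ 0` since `d ≥ 2g` and `e ≥ 3g`
    have hscaled : g * (2 * d + e) ≤ g * (d.lcm e + g) := by nlinarith
    have := Nat.le_of_mul_le_mul_left hscaled hg0
    omega
  · omega

theorem Nat.add_add_min_le_add_gcd {d e t : ℕ} (hd : d ∣ t) (he : e ∣ t) (hdt : d < t)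
    (het : e < t) : d + e + min d e ≤ t + d.gcd e := by
  rcases le_total d e with hde | hed
  · have := Nat.two_mul_add_le_add_gcd hd he het hde
    omega
  · have := Nat.two_mul_add_le_add_gcd he hd hdt hed
    rw [Nat.gcd_comm] at this
    omega

theorem List.HasPeriod.getElem?_eq_of_take_eq {α : Type*} {L M : List α} {p q i : ℕ}
    (hL : L.HasPeriod p) (hM : M.HasPeriod q) (hp : 0 < p) (hq : 0 < q)
    (htake : L.take i = M.take i) (hi : p + q - p.gcd q ≤ i) (hiL : i < L.length)
    (hiM : i < M.length) : L[i]? = M[i]? := by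
  set g := p.gcd q
  have hgp : g ∣ p := Nat.gcd_dvd_left p q
  have hgq : g ∣ q := Nat.gcd_dvd_right p q
  have hpi : p ≤ i := by have := Nat.le_of_dvd hq hgq; omega
  have hqi : q ≤ i := by have := Nat.le_of_dvd hp hgp; omega
  have hwp : (L.take i).HasPeriod p := hL.infix (L.take_prefix i).isInfix
  have hwq : (L.take i).HasPeriod q := htake ▸ hM.infix (M.take_prefix i).isInfix
  have hwg := List.hasPeriod_iff_forall_getElem?_mod.mp
    (hwp.gcd hwq (by rwa [List.length_take, min_eq_left hiL.le]))
  have hmod : (i - p) % g = (i - q) % g := by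
    have hp' : i - p ≡ i [MOD g] :=
      (Nat.modEq_iff_dvd' (Nat.sub_le i p)).mpr (by rwa [Nat.sub_sub_self hpi])
    have hq' : i - q ≡ i [MOD g] :=
      (Nat.modEq_iff_dvd' (Nat.sub_le i q)).mpr (by rwa [Nat.sub_sub_self hqi])
    exact hp'.trans hq'.symm
  calc L[i]? = L[i - p]? := by
        rw [(List.hasPeriod_iff_getElem?.mp hL (i - p) (by omega)), Nat.sub_add_cancel hpi]
    _ = (L.take i)[i - p]? := (List.getElem?_take_of_lt (by omega)).symm
    _ = (L.take i)[i - q]? := by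
        have hlen : (L.take i).length = i := List.length_take_of_le hiL.le
        rw [hwg _ (by omega), hwg (i - q) (by omega), hmod]
    _ = M[i - q]? := by rw [htake, List.getElem?_take_of_lt (by omega)]
    _ = M[i]? := by
        rw [(List.hasPeriod_iff_getElem?.mp hM (i - q) (by omega)), Nat.sub_add_cancel hqi]

theorem List.take_ofFn_eq_take_ofFn {α : Type*} {t : ℕ} {x y : Fin t → α} {i : Fin t}
    (h : ∀ j < i, x j = y j) : (List.ofFn x).take i = (List.ofFn y).take i := by
  refine List.ext_getElem? fun j => ?_
  rw [List.getElem?_take, List.getElem?_take]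
  split_ifs with hj
  · simp only [List.getElem?_ofFn, dif_pos (hj.trans i.isLt)]
    rw [h ⟨j, hj.trans i.isLt⟩ hj]
  · rfl

theorem Fin.lt_add_natCast {n d : ℕ} {i : Fin (n + 1)} (hd : 0 < d) (h : i.val + d < n + 1) :
    i < i + d := by
  rw [Fin.lt_def, Fin.val_add, Fin.val_natCast, Nat.add_mod_mod, Nat.mod_eq_of_lt h]
  omega

section LexCovBy

variable {ι α : Type*} [Preorder ι] [Preorder α] {x y : ι → α} {i j : ι}

theorem isMax_of_toLex_covBy (hxy : toLex x ⋖ toLex y) (hagree : ∀ k < i, x k = y k)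
    (hi : x i < y i) (hij : i < j) : IsMax (x j) := by
  classical
  refine isMax_iff_forall_not_lt.mpr fun c hc => hxy.2 (c := toLex (update x j c)) ?_ ?_
  · exact ⟨j, fun k hk => by simp [update_of_ne hk.ne], by simpa⟩
  · exact ⟨i, fun k hk => by simp [update_of_ne (hk.trans hij).ne, hagree k hk],
      by simpa [update_of_ne hij.ne]⟩

theorem isMin_of_toLex_covBy (hxy : toLex x ⋖ toLex y) (hagree : ∀ k < i, x k = y k)
    (hi : x i < y i) (hij : i < j) : IsMin (y j) := by
  classical
  refine isMin_iff_forall_not_lt.mpr fun c hc => hxy.2 (c := toLex (update y j c)) ?_ ?_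
  · exact ⟨i, fun k hk => by simp [update_of_ne (hk.trans hij).ne, hagree k hk],
      by simpa [update_of_ne hij.ne]⟩
  · exact ⟨j, fun k hk => by simp [update_of_ne hk.ne], by simpa⟩

end LexCovBy

section CyclicShift

variable {α : Type*} {n : ℕ}

def cyclicShift (x : Fin (n + 1) → α) : Fin (n + 1) → α := fun i => x (i + 1)

theorem iterate_cyclicShift (x : Fin (n + 1) → α) (m : ℕ) :
    cyclicShift^[m] x = fun i => x (i + m) := by
  induction m with
  | zero => simp
  | succ m ih =>
    rw [iterate_succ_apply', ih]
    funext i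
    simp only [cyclicShift, Nat.cast_succ, add_assoc, add_comm (1 : Fin (n + 1))]

theorem exists_dvd_period_of_not_hasFullPeriod {x : Fin (n + 1) → α} (hx : ¬HasFullPeriod x) :
    ∃ d, 0 < d ∧ d < n + 1 ∧ d ∣ n + 1 ∧ ∀ i, x (i + d) = x i := by
  obtain ⟨k₁, k₂, hshift, hne⟩ := not_injective_iff.mp hx
  have hk : ∀ i, x (i + (k₁ - k₂)) = x i := fun i => by
    simpa [add_sub_assoc] using (congrFun hshift (i + k₁)).symm
  have hk0 : 0 < (k₁ - k₂).val := Fin.pos_of_ne_zero (sub_ne_zero.mpr hne)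
  have hper : IsPeriodicPt cyclicShift (k₁ - k₂).val x := by
    simp [IsPeriodicPt, IsFixedPt, iterate_cyclicShift, hk]
  have hper_len : IsPeriodicPt cyclicShift (n + 1) x := by
    simp [IsPeriodicPt, IsFixedPt, iterate_cyclicShift]
  refine ⟨_, Nat.gcd_pos_of_pos_left _ hk0, (Nat.gcd_le_left _ hk0).trans_lt (k₁ - k₂).isLt,
    Nat.gcd_dvd_right _ _, fun i => ?_⟩
  have := (hper.gcd hper_len).eq
  rw [iterate_cyclicShift] at this
  exact congrFun this i

theorem List.hasPeriod_ofFn {x : Fin (n + 1) → α} {d : ℕ} (hx : ∀ i, x (i + d) = x i) :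
    (List.ofFn x).HasPeriod d := by
  rw [List.hasPeriod_iff_getElem?]
  intro j hj
  rw [List.length_ofFn] at hj
  rw [List.getElem?_ofFn, List.getElem?_ofFn, dif_pos (by omega), dif_pos (by omega),
    ← hx ⟨j, by omega⟩]
  congr 2
  ext
  rw [Fin.val_add, Fin.val_natCast, Nat.add_mod_mod, Fin.val_mk, Nat.mod_eq_of_lt (by omega)]

end CyclicShift

theorem consecutive_lex_has_full_period_general {F : Type*} [LinearOrder F]
    (t : ℕ) (u v : Lex (Fin t → F)) (huv : u ⋖ v) :
    HasFullPeriod (ofLex u) ∨ HasFullPeriod (ofLex v) := by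
  obtain _ | n := t
  · exact (huv.lt.ne (Subsingleton.elim (α := Fin 0 → F) u v)).elim
  by_contra! h
  obtain ⟨d, hd0, hdt, hdvd, hu⟩ := exists_dvd_period_of_not_hasFullPeriod h.1
  obtain ⟨e, he0, het, hedvd, hv⟩ := exists_dvd_period_of_not_hasFullPeriod h.2
  obtain ⟨i, hagree, hi⟩ :
    ∃ i, (∀ j < i, ofLex u j = ofLex v j) ∧ ofLex u i < ofLex v i := huv.lt
  have hid : n + 1 ≤ i + d := by
    by_contra! hlt
    exact (isMax_of_toLex_covBy (x := ofLex u) huv hagree hi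
      (Fin.lt_add_natCast hd0 hlt)).not_lt (by rwa [hu])
  have hie : n + 1 ≤ i + e := by
    by_contra! hlt
    exact (isMin_of_toLex_covBy (y := ofLex v) huv hagree hi
      (Fin.lt_add_natCast he0 hlt)).not_lt (by rwa [hv])
  have hlen := Nat.add_add_min_le_add_gcd hdvd hedvd hdt het
  have heq := (List.hasPeriod_ofFn hu).getElem?_eq_of_take_eq (List.hasPeriod_ofFn hv) hd0 he0
    (List.take_ofFn_eq_take_ofFn hagree) (by omega) (by simpa using i.isLt) (by simpa using i.isLt)
  simp only [List.getElem?_ofFn, dif_pos i.isLt, Option.some_inj] at heq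
  exact hi.ne heq

/-- For any two lexicographically consecutive vectors `u, v` in `F_q^t` (with respect
to any total order on `F_q`), at least one of `u, v` has period `t`, i.e. its `t`
cyclic shifts are pairwise distinct. -/
theorem consecutive_lex_has_full_period {F : Type*} [Field F] [Fintype F] [LinearOrder F]
    (t : ℕ) (u v : Lex (Fin t → F)) (huv : u ⋖ v) :
    HasFullPeriod (ofLex u) ∨ HasFullPeriod (ofLex v) :=
  consecutive_lex_has_full_period_general t u v huv
end

section
/- The function L(ε) = ε/(1−ε) + ln(1−ε) on [0,1) satisfies L(ε) = Σ_{j≥2} (1 − 1/j) ε^j, is monotonically increasing with L(0) = 0 and L(ε) → +∞ as ε → 1; moreover for α > 1 and ε√α < 1, L^{-1}(α L(ε)) ≤ √α · ε. -/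
/-!
Expanding `ε/(1-ε) = Σ_{j≥1} ε^j` and `ln(1-ε) = -Σ_{j≥1} ε^j/j` gives the power series of `L`,
whose coefficients are nonnegative. Hence for `c ≥ 1` the series of `L(cε)` dominates that of
`c² L(ε)` term by term, since `c² ≤ c^j` for `j ≥ 2`. With `c = √α` this reads
`α L(ε) ≤ L(√α ε)`, and strict monotonicity of `L` (its derivative is `ε/(1-ε)²`) turns
`L(δ) = α L(ε)` into `δ ≤ √α ε`.
-/

open Real Filter Set Topology

noncomputable def L (ε : ℝ) : ℝ := ε / (1 - ε) + log (1 - ε)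

lemma hasSum_L {ε : ℝ} (hε : |ε| < 1) :
    HasSum (fun j : ℕ => (1 - 1 / ((j : ℝ) + 2)) * ε ^ (j + 2)) (L ε) := by
  have geom : HasSum (fun n : ℕ => ε ^ (n + 1)) (ε / (1 - ε)) := by
    simpa [pow_succ', div_eq_mul_inv] using (hasSum_geometric_of_abs_lt_one hε).mul_left ε
  have series := geom.sub (hasSum_pow_div_log_of_abs_lt_one hε)
  rw [sub_neg_eq_add] at series
  have shifted := (hasSum_nat_add_iff' 1).mpr series
  have hterm (j : ℕ) : (1 - 1 / ((j : ℝ) + 2)) * ε ^ (j + 2) =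
      ε ^ (j + 1 + 1) - ε ^ (j + 1 + 1) / (((j + 1 : ℕ) : ℝ) + 1) := by
    push_cast
    field_simp
    ring
  -- the `j = 1` term `ε - ε/1` vanishes
  have hL : L ε = ε / (1 - ε) + log (1 - ε) -
      ∑ i ∈ Finset.range 1, (ε ^ (i + 1) - ε ^ (i + 1) / ((i : ℝ) + 1)) := by
    simp [L]
  rw [funext hterm, hL]
  exact shifted

lemma hasDerivAt_L {x : ℝ} (hx : x ≠ 1) : HasDerivAt L (x / (1 - x) ^ 2) x := by
  have hne : 1 - x ≠ 0 := sub_ne_zero.mpr hx.symm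
  have one_sub : HasDerivAt (fun y : ℝ => 1 - y) (-1) x := (hasDerivAt_id' x).const_sub 1
  exact (((hasDerivAt_id' x).fun_div one_sub hne).add (one_sub.log hne)).congr_deriv
    (by field_simp; ring)

lemma strictMonoOn_L : StrictMonoOn L (Ico 0 1) := by
  refine strictMonoOn_of_deriv_pos (convex_Ico 0 1)
    (fun x hx => (hasDerivAt_L hx.2.ne).continuousAt.continuousWithinAt) fun x hx => ?_
  rw [interior_Ico] at hx
  rw [(hasDerivAt_L hx.2.ne).deriv]
  exact div_pos hx.1 (pow_pos (sub_pos.mpr hx.2) 2)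

/-- From `ln y ≤ y/2 - 1 + ln 2`, i.e. `ln (y/2) ≤ y/2 - 1`, at `y = 1/(1-ε)`. -/
lemma inv_one_sub_div_two_sub_log_two_le_L {ε : ℝ} (hε : ε < 1) :
    (1 - ε)⁻¹ / 2 - log 2 ≤ L ε := by
  have hpos : 0 < (1 - ε)⁻¹ := inv_pos.mpr (sub_pos.mpr hε)
  have hlog := log_le_sub_one_of_pos (half_pos hpos)
  rw [log_div hpos.ne' two_ne_zero, log_inv] at hlog
  have hL : L ε = (1 - ε)⁻¹ - 1 + log (1 - ε) := by
    rw [L]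
    field_simp [(sub_pos.mpr hε).ne']
    ring
  linarith

lemma tendsto_L_nhdsLT_one : Tendsto L (𝓝[<] 1) atTop := by
  have one_sub : Tendsto (fun ε : ℝ => 1 - ε) (𝓝[<] 1) (𝓝[>] 0) := by
    refine tendsto_nhdsWithin_of_tendsto_nhds_of_eventually_within _ ?_ ?_
    · exact ((continuous_sub_left (1 : ℝ)).tendsto' 1 0 (sub_self 1)).mono_left
        nhdsWithin_le_nhds
    · filter_upwards [self_mem_nhdsWithin] with ε (hε : ε < 1) using sub_pos.mpr hε
  have lower : Tendsto (fun ε : ℝ => (1 - ε)⁻¹ / 2 - log 2) (𝓝[<] 1) atTop :=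
    tendsto_atTop_add_const_right _ _
      ((tendsto_inv_nhdsGT_zero.comp one_sub).atTop_div_const two_pos)
  exact tendsto_atTop_mono' _ (eventually_nhdsWithin_of_forall
    fun ε (hε : ε < 1) => inv_one_sub_div_two_sub_log_two_le_L hε) lower

lemma sq_mul_L_le_L_mul {c ε : ℝ} (hc : 1 ≤ c) (hε : 0 ≤ ε) (hcε : c * ε < 1) :
    c ^ 2 * L ε ≤ L (c * ε) := by
  have hε1 : ε < 1 := lt_of_le_of_lt (le_mul_of_one_le_left hε hc) hcε
  have habs : |ε| < 1 := by rwa [abs_of_nonneg hε]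
  have hcabs : |c * ε| < 1 := by rwa [abs_of_nonneg (mul_nonneg (by linarith) hε)]
  refine hasSum_le (fun j => ?_) ((hasSum_L habs).mul_left (c ^ 2)) (hasSum_L hcabs)
  have coeff_nonneg : (0 : ℝ) ≤ 1 - 1 / ((j : ℝ) + 2) := by
    rw [sub_nonneg, div_le_one (by positivity)]
    linarith [(j.cast_nonneg : (0 : ℝ) ≤ j)]
  have hpow : c ^ 2 ≤ c ^ (j + 2) := pow_le_pow_right₀ hc (by omega)
  calc c ^ 2 * ((1 - 1 / ((j : ℝ) + 2)) * ε ^ (j + 2))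
      = (1 - 1 / ((j : ℝ) + 2)) * (c ^ 2 * ε ^ (j + 2)) := by ring
    _ ≤ (1 - 1 / ((j : ℝ) + 2)) * (c ^ (j + 2) * ε ^ (j + 2)) := by gcongr
    _ = (1 - 1 / ((j : ℝ) + 2)) * (c * ε) ^ (j + 2) := by rw [mul_pow]

lemma le_sqrt_mul_of_L_eq_mul_L {α ε δ : ℝ} (hα : 1 ≤ α) (hε : 0 ≤ ε)
    (hαε : ε * √α < 1) (hδ : δ ∈ Ico (0 : ℝ) 1) (hL : L δ = α * L ε) : δ ≤ √α * ε := by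
  have hsqrt : 1 ≤ √α := one_le_sqrt.mpr hα
  rw [mul_comm] at hαε
  have hdom := sq_mul_L_le_L_mul hsqrt hε hαε
  rw [sq_sqrt (by linarith), ← hL] at hdom
  exact (strictMonoOn_L.le_iff_le hδ ⟨mul_nonneg (by linarith) hε, hαε⟩).mp hdom

/-- The function `L(ε) = ε/(1−ε) + ln(1−ε)` on `[0,1)` satisfies
`L(ε) = Σ_{j≥2} (1 − 1/j) ε^j`, is strictly monotonically increasing with `L(0) = 0`
and `L(ε) → +∞` as `ε → 1⁻`; moreover for `α > 1` and `ε√α < 1`, any value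
`δ = L^{-1}(α·L(ε))` (i.e. `δ ∈ [0,1)` with `L(δ) = α·L(ε)`) satisfies `δ ≤ √α·ε`. -/
theorem L_function_properties :
    (∀ e : ℝ, 0 ≤ e → e < 1 →
      e / (1 - e) + Real.log (1 - e) =
        ∑' j : ℕ, (1 - 1 / ((j : ℝ) + 2)) * e ^ (j + 2)) ∧
    StrictMonoOn (fun e : ℝ => e / (1 - e) + Real.log (1 - e)) (Set.Ico 0 1) ∧
    ((0 : ℝ) / (1 - 0) + Real.log (1 - 0) = 0) ∧
    Filter.Tendsto (fun e : ℝ => e / (1 - e) + Real.log (1 - e))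
      (nhdsWithin 1 (Set.Iio 1)) Filter.atTop ∧
    (∀ α e δ : ℝ, 1 < α → 0 ≤ e → e < 1 → e * Real.sqrt α < 1 →
      0 ≤ δ → δ < 1 →
      δ / (1 - δ) + Real.log (1 - δ) = α * (e / (1 - e) + Real.log (1 - e)) →
      δ ≤ Real.sqrt α * e) := by
  refine ⟨fun e he0 he1 => ?_, strictMonoOn_L, by norm_num, tendsto_L_nhdsLT_one,
    fun α e δ hα he0 _ hαe hδ0 hδ1 hL => le_sqrt_mul_of_L_eq_mul_L hα.le he0 hαe ⟨hδ0, hδ1⟩ hL⟩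
  exact (hasSum_L (by rwa [abs_of_nonneg he0])).tsum_eq.symm
end
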